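/- arXiv:2506.21941 — 6 statements merged into one kernel-verified Lean document; each statement's English description precedes it below -/
import Mathlib

section
/- Let n ≥ 2, let i ≠ j and k ≠ l be indices in {1, …, n}, let ε_1, ε_2, ε_3, ε_4 ∈ {+1, −1}, and suppose α = ε_1 e_i + ε_2 e_j and β = ε_3 e_k + ε_4 e_l are linearly independent long roots in Φ_{B_n}. Let P be the plane spanned by {α, β} and let d be the dimension of the span of {e_i, e_j, e_k, e_l}. If d = 4, then P contains exactly 4 roots of Φ_{B_n} and all of them are long; if d = 3, then P contains exactly 6 roots of Φ_{B_n} and all of them are long. -/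
/-- The `i`-th standard basis vector of `ℝ^n` (Euclidean space). -/
noncomputable def stdBasis (n : ℕ) (i : Fin n) : EuclideanSpace ℝ (Fin n) :=
  EuclideanSpace.single i 1

/-- Short roots of `B_n` : `± e_i`. -/
def IsShortRoot (n : ℕ) (x : EuclideanSpace ℝ (Fin n)) : Prop :=
  ∃ i : Fin n, x = stdBasis n i ∨ x = -stdBasis n i

/-- Long roots of `B_n` : `± e_i ± e_j` for `i ≠ j`. -/
def IsLongRoot (n : ℕ) (x : EuclideanSpace ℝ (Fin n)) : Prop :=
  ∃ i j : Fin n, i ≠ j ∧ ∃ ε₁ ε₂ : ℝ, (ε₁ = 1 ∨ ε₁ = -1) ∧ (ε₂ = 1 ∨ ε₂ = -1) ∧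
    x = ε₁ • stdBasis n i + ε₂ • stdBasis n j

/-- The root system `Φ_{B_n}`. -/
def PhiB (n : ℕ) : Set (EuclideanSpace ℝ (Fin n)) :=
  {x | IsShortRoot n x ∨ IsLongRoot n x}

/-! A root in the plane is `u • α + v • β`. At an index lying in the support of only one of
`α`, `β` its coordinate is `± u` or `± v`, so `u, v ∈ {0, ±1}`. A root has at most two nonzero
coordinates, so both coefficients can be nonzero only if the supports share an index and the
coordinates there cancel; this singles out one more pair of roots `±(α - ε β)` when `d = 3` and
none when `d = 4`. By linear independence the coefficient pair determines the root, so the roots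
are counted by their coefficient pairs; `d` is the number of distinct indices among `i, j, k, l`. -/

lemma stdBasis_apply (n : ℕ) (i m : Fin n) : stdBasis n i m = if m = i then 1 else 0 := by
  simp [stdBasis, PiLp.single_apply]

lemma linearIndependent_stdBasis (n : ℕ) : LinearIndependent ℝ (stdBasis n) := by
  have h : stdBasis n = (EuclideanSpace.basisFun (Fin n) ℝ).toBasis := by
    ext1 i; simp [stdBasis]
  exact h ▸ Module.Basis.linearIndependent _

lemma finrank_span_image_stdBasis (n : ℕ) (s : Finset (Fin n)) :
    Module.finrank ℝ (Submodule.span ℝ (stdBasis n '' s)) = s.card := by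
  classical
  rw [finrank_span_set_eq_card ((linearIndependent_stdBasis n).linearIndepOn _).id_image,
    Set.toFinset_image, Finset.toFinset_coe,
    Finset.card_image_of_injective _ (linearIndependent_stdBasis n).injective]

lemma finrank_span_stdBasis_four (n : ℕ) (i j k l : Fin n) :
    Module.finrank ℝ (Submodule.span ℝ {stdBasis n i, stdBasis n j, stdBasis n k, stdBasis n l}) =
      ({i, j, k, l} : Finset (Fin n)).card := by
  have h : ({stdBasis n i, stdBasis n j, stdBasis n k, stdBasis n l} : Set _) =
      stdBasis n '' ({i, j, k, l} : Finset (Fin n)) := by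
    simp [Set.image_insert_eq]
  rw [h, finrank_span_image_stdBasis]

def IsSign (ε : ℝ) : Prop := ε = 1 ∨ ε = -1

namespace IsSign

variable {ε δ u : ℝ}

lemma ne_zero (h : IsSign ε) : ε ≠ 0 := by
  rcases h with rfl | rfl <;> norm_num

lemma mul_self (h : IsSign ε) : ε * ε = 1 := by
  rcases h with rfl | rfl <;> norm_num

lemma neg (h : IsSign ε) : IsSign (-ε) := by
  rcases h with rfl | rfl <;> norm_num [IsSign]

lemma mul (hε : IsSign ε) (hδ : IsSign δ) : IsSign (ε * δ) := by
  rcases hε with rfl | rfl <;> rcases hδ with rfl | rfl <;> norm_num [IsSign]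

lemma of_mul_right (hε : IsSign ε) (h : IsSign (u * ε)) : IsSign u := by
  simpa [mul_assoc, hε.mul_self] using h.mul hε

end IsSign

section Roots

variable {n : ℕ} {x : EuclideanSpace ℝ (Fin n)}

lemma IsLongRoot.neg (hx : IsLongRoot n x) : IsLongRoot n (-x) := by
  obtain ⟨i, j, hij, ε₁, ε₂, h₁, h₂, rfl⟩ := hx
  exact ⟨i, j, hij, -ε₁, -ε₂, IsSign.neg h₁, IsSign.neg h₂, by module⟩

lemma ne_zero_of_mem_PhiB (hx : x ∈ PhiB n) : x ≠ 0 := by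
  rintro rfl
  rcases hx with ⟨i, h | h⟩ | ⟨i, j, hij, ε₁, ε₂, h₁, h₂, h⟩
  · simpa [stdBasis_apply] using congrArg (· i) h
  · simpa [stdBasis_apply] using congrArg (· i) h
  · simpa [stdBasis_apply, hij, IsSign.ne_zero h₁ |>.symm] using congrArg (· i) h

lemma isSign_apply_of_mem_PhiB (hx : x ∈ PhiB n) {m : Fin n} (hm : x m ≠ 0) :
    IsSign (x m) := by
  rcases hx with ⟨i, rfl | rfl⟩ | ⟨i, j, hij, ε₁, ε₂, h₁, h₂, rfl⟩ <;>
    simp only [stdBasis_apply, PiLp.add_apply, PiLp.smul_apply, PiLp.neg_apply,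
      smul_eq_mul] at hm ⊢ <;>
    split_ifs at hm ⊢ <;> simp_all [IsSign]

lemma apply_eq_zero_of_mem_PhiB (hx : x ∈ PhiB n) {m₁ m₂ m₃ : Fin n} (h₁₂ : m₁ ≠ m₂)
    (h₁₃ : m₁ ≠ m₃) (h₂₃ : m₂ ≠ m₃) : x m₁ = 0 ∨ x m₂ = 0 ∨ x m₃ = 0 := by
  rcases hx with ⟨i, rfl | rfl⟩ | ⟨i, j, hij, ε₁, ε₂, h₁, h₂, rfl⟩ <;>
    simp only [stdBasis_apply, PiLp.add_apply, PiLp.smul_apply, PiLp.neg_apply, smul_eq_mul] <;>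
    grind

lemma eq_zero_or_isSign_of_mem_PhiB (hx : x ∈ PhiB n) {m : Fin n} {a u : ℝ} (ha : IsSign a)
    (hxm : x m = u * a) : u = 0 ∨ IsSign u := by
  by_cases hu : u = 0
  · exact .inl hu
  · have hxm₀ : x m ≠ 0 := hxm ▸ mul_ne_zero hu ha.ne_zero
    exact .inr (ha.of_mul_right (hxm ▸ isSign_apply_of_mem_PhiB hx hxm₀))

end Roots

section Plane

variable {n : ℕ} {α β : EuclideanSpace ℝ (Fin n)}

lemma span_pair_inter_PhiB_eq_image {S : Set (ℝ × ℝ)}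
    (hS : ∀ u v : ℝ, u • α + v • β ∈ PhiB n → (u, v) ∈ S)
    (hlong : ∀ uv ∈ S, IsLongRoot n (uv.1 • α + uv.2 • β)) :
    (Submodule.span ℝ {α, β} : Set (EuclideanSpace ℝ (Fin n))) ∩ PhiB n =
      (fun uv : ℝ × ℝ ↦ uv.1 • α + uv.2 • β) '' S := by
  ext x
  constructor
  · rintro ⟨hx, hΦ⟩
    obtain ⟨u, v, rfl⟩ := Submodule.mem_span_pair.1 hx
    exact ⟨(u, v), hS u v hΦ, rfl⟩
  · rintro ⟨uv, huv, rfl⟩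
    exact ⟨Submodule.mem_span_pair.2 ⟨uv.1, uv.2, rfl⟩, Or.inr (hlong uv huv)⟩

lemma span_pair_inter_PhiB_of_coeffs {S : Set (ℝ × ℝ)} (hind : LinearIndependent ℝ ![α, β])
    (hS : ∀ u v : ℝ, u • α + v • β ∈ PhiB n → (u, v) ∈ S)
    (hlong : ∀ uv ∈ S, IsLongRoot n (uv.1 • α + uv.2 • β)) :
    ((Submodule.span ℝ {α, β} : Set (EuclideanSpace ℝ (Fin n))) ∩ PhiB n).ncard = S.ncard ∧
      ∀ x ∈ (Submodule.span ℝ {α, β} : Set (EuclideanSpace ℝ (Fin n))) ∩ PhiB n,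
        IsLongRoot n x := by
  rw [span_pair_inter_PhiB_eq_image hS hlong]
  refine ⟨Set.ncard_image_of_injective _ fun uv uv' h ↦ ?_, ?_⟩
  · obtain ⟨h₁, h₂⟩ := hind.eq_of_pair h
    exact Prod.ext h₁ h₂
  · rintro _ ⟨uv, huv, rfl⟩
    exact hlong uv huv

lemma not_zero_smul_add_zero_smul_mem_PhiB : (0 : ℝ) • α + (0 : ℝ) • β ∉ PhiB n := fun h ↦
  ne_zero_of_mem_PhiB h (by simp)

variable {p q r s : Fin n} {a b c d : ℝ}

lemma coeffs_of_smul_add_smul_mem_PhiB_of_disjoint (hpq : p ≠ q) (hpr : p ≠ r) (hps : p ≠ s)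
    (hqr : q ≠ r) (hqs : q ≠ s) (hrs : r ≠ s) (ha : IsSign a) (hb : IsSign b) (hc : IsSign c)
    (hα : α = a • stdBasis n p + b • stdBasis n q) (hβ : β = c • stdBasis n r + d • stdBasis n s)
    {u v : ℝ} (hx : u • α + v • β ∈ PhiB n) :
    (u, v) ∈ ({(1, 0), (-1, 0), (0, 1), (0, -1)} : Set (ℝ × ℝ)) := by
  have hxp : (u • α + v • β) p = u * a := by
    simp [hα, hβ, stdBasis_apply, hpq, hpr, hps]
  have hxq : (u • α + v • β) q = u * b := by
    simp [hα, hβ, stdBasis_apply, hpq.symm, hqr, hqs]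
  have hxr : (u • α + v • β) r = v * c := by
    simp [hα, hβ, stdBasis_apply, hpr.symm, hqr.symm, hrs]
  rcases eq_zero_or_isSign_of_mem_PhiB hx ha hxp with rfl | hu <;>
    rcases eq_zero_or_isSign_of_mem_PhiB hx hc hxr with rfl | hv
  · exact absurd hx not_zero_smul_add_zero_smul_mem_PhiB
  · rcases hv with rfl | rfl <;> simp
  · rcases hu with rfl | rfl <;> simp
  · have := apply_eq_zero_of_mem_PhiB hx hpq hpr hqr
    simp_all [hu.ne_zero, hv.ne_zero, ha.ne_zero, hb.ne_zero, hc.ne_zero]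

lemma coeffs_of_smul_add_smul_mem_PhiB_of_shared (hpq : p ≠ q) (hpr : p ≠ r) (hqr : q ≠ r)
    (ha : IsSign a) (hc : IsSign c) (hd : IsSign d)
    (hα : α = a • stdBasis n p + b • stdBasis n q) (hβ : β = c • stdBasis n q + d • stdBasis n r)
    {u v : ℝ} (hx : u • α + v • β ∈ PhiB n) :
    (u, v) ∈ ({(1, 0), (-1, 0), (0, 1), (0, -1), (1, -(b * c)), (-1, b * c)} : Set (ℝ × ℝ)) := by
  have hxp : (u • α + v • β) p = u * a := by
    simp [hα, hβ, stdBasis_apply, hpq, hpr]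
  have hxq : (u • α + v • β) q = u * b + v * c := by
    simp [hα, hβ, stdBasis_apply, hpq.symm, hqr]
  have hxr : (u • α + v • β) r = v * d := by
    simp [hα, hβ, stdBasis_apply, hpr.symm, hqr.symm]
  rcases eq_zero_or_isSign_of_mem_PhiB hx ha hxp with rfl | hu <;>
    rcases eq_zero_or_isSign_of_mem_PhiB hx hd hxr with rfl | hv
  · exact absurd hx not_zero_smul_add_zero_smul_mem_PhiB
  · rcases hv with rfl | rfl <;> simp
  · rcases hu with rfl | rfl <;> simp
  · have hq : u * b + v * c = 0 := by
      have := apply_eq_zero_of_mem_PhiB hx hpq hpr hqr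
      simp_all [hu.ne_zero, hv.ne_zero, ha.ne_zero, hd.ne_zero]
    have hv' : v = -(u * (b * c)) := by
      linear_combination c * hq - v * hc.mul_self
    rcases hu with rfl | rfl <;> simp [hv']

theorem span_pair_inter_PhiB_of_disjoint (hind : LinearIndependent ℝ ![α, β])
    (hpq : p ≠ q) (hpr : p ≠ r) (hps : p ≠ s) (hqr : q ≠ r) (hqs : q ≠ s) (hrs : r ≠ s)
    (ha : IsSign a) (hb : IsSign b) (hc : IsSign c) (hd : IsSign d)
    (hα : α = a • stdBasis n p + b • stdBasis n q) (hβ : β = c • stdBasis n r + d • stdBasis n s) :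
    ((Submodule.span ℝ {α, β} : Set (EuclideanSpace ℝ (Fin n))) ∩ PhiB n).ncard = 4 ∧
      ∀ x ∈ (Submodule.span ℝ {α, β} : Set (EuclideanSpace ℝ (Fin n))) ∩ PhiB n,
        IsLongRoot n x := by
  have hαl : IsLongRoot n α := ⟨p, q, hpq, a, b, ha, hb, hα⟩
  have hβl : IsLongRoot n β := ⟨r, s, hrs, c, d, hc, hd, hβ⟩
  obtain ⟨hcard, hlong⟩ := span_pair_inter_PhiB_of_coeffs hind
    (fun _ _ ↦ coeffs_of_smul_add_smul_mem_PhiB_of_disjoint hpq hpr hps hqr hqs hrs ha hb hc hα hβ)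
    (by rintro _ (rfl | rfl | rfl | rfl) <;> simp [hαl, hβl, hαl.neg, hβl.neg])
  exact ⟨hcard.trans (by norm_num [Set.ncard_insert_of_notMem]), hlong⟩

theorem span_pair_inter_PhiB_of_shared (hind : LinearIndependent ℝ ![α, β])
    (hpq : p ≠ q) (hpr : p ≠ r) (hqr : q ≠ r)
    (ha : IsSign a) (hb : IsSign b) (hc : IsSign c) (hd : IsSign d)
    (hα : α = a • stdBasis n p + b • stdBasis n q) (hβ : β = c • stdBasis n q + d • stdBasis n r) :
    ((Submodule.span ℝ {α, β} : Set (EuclideanSpace ℝ (Fin n))) ∩ PhiB n).ncard = 6 ∧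
      ∀ x ∈ (Submodule.span ℝ {α, β} : Set (EuclideanSpace ℝ (Fin n))) ∩ PhiB n,
        IsLongRoot n x := by
  have hαl : IsLongRoot n α := ⟨p, q, hpq, a, b, ha, hb, hα⟩
  have hβl : IsLongRoot n β := ⟨q, r, hqr, c, d, hc, hd, hβ⟩
  have hγl : IsLongRoot n (α - (b * c) • β) := by
    refine ⟨p, r, hpr, a, -(b * c * d), ha, ((hb.mul hc).mul hd).neg, ?_⟩
    rw [hα, hβ]
    match_scalars
    · ring
    · linear_combination (-b) * hc.mul_self
    · ring
  obtain ⟨hcard, hlong⟩ := span_pair_inter_PhiB_of_coeffs hind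
    (fun _ _ ↦ coeffs_of_smul_add_smul_mem_PhiB_of_shared hpq hpr hqr ha hc hd hα hβ)
    (by
      rintro _ (rfl | rfl | rfl | rfl | rfl | rfl)
      exacts [by simpa using hαl, by simpa using hαl.neg, by simpa using hβl,
        by simpa using hβl.neg, by simpa [sub_eq_add_neg] using hγl,
        by simpa [neg_add_eq_sub] using hγl.neg])
  refine ⟨hcard.trans ?_, hlong⟩
  rcases hb.mul hc with h | h <;> rw [h] <;> norm_num [Set.ncard_insert_of_notMem]

end Plane

section Card

variable {ι : Type*} [DecidableEq ι] {i j k l : ι}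

lemma cross_ne_of_card_eq_four (h : ({i, j, k, l} : Finset ι).card = 4) :
    i ≠ k ∧ i ≠ l ∧ j ≠ k ∧ j ≠ l := by
  grind [Finset.card_insert_eq_ite]

lemma cross_eq_of_card_eq_three (hij : i ≠ j) (hkl : k ≠ l)
    (h : ({i, j, k, l} : Finset ι).card = 3) :
    (i = k ∧ j ≠ l) ∨ (i = l ∧ j ≠ k) ∨ (j = k ∧ i ≠ l) ∨ (j = l ∧ i ≠ k) := by
  grind [Finset.card_insert_eq_ite]

end Card

theorem stmt2_general (n : ℕ) (i j k l : Fin n) (hij : i ≠ j) (hkl : k ≠ l)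
    (ε₁ ε₂ ε₃ ε₄ : ℝ)
    (hε₁ : ε₁ = 1 ∨ ε₁ = -1) (hε₂ : ε₂ = 1 ∨ ε₂ = -1)
    (hε₃ : ε₃ = 1 ∨ ε₃ = -1) (hε₄ : ε₄ = 1 ∨ ε₄ = -1)
    (α β : EuclideanSpace ℝ (Fin n))
    (hα : α = ε₁ • stdBasis n i + ε₂ • stdBasis n j)
    (hβ : β = ε₃ • stdBasis n k + ε₄ • stdBasis n l)
    (hind : LinearIndependent ℝ ![α, β])
    (P : Submodule ℝ (EuclideanSpace ℝ (Fin n)))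
    (hP : P = Submodule.span ℝ {α, β})
    (d : ℕ)
    (hd : d = Module.finrank ℝ
      (Submodule.span ℝ {stdBasis n i, stdBasis n j, stdBasis n k, stdBasis n l})) :
    (d = 4 → ((P : Set (EuclideanSpace ℝ (Fin n))) ∩ PhiB n).ncard = 4 ∧
      ∀ x ∈ (P : Set (EuclideanSpace ℝ (Fin n))) ∩ PhiB n, IsLongRoot n x) ∧
    (d = 3 → ((P : Set (EuclideanSpace ℝ (Fin n))) ∩ PhiB n).ncard = 6 ∧
      ∀ x ∈ (P : Set (EuclideanSpace ℝ (Fin n))) ∩ PhiB n, IsLongRoot n x) := by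
  subst hP hd
  rw [finrank_span_stdBasis_four]
  refine ⟨fun h4 ↦ ?_, fun h3 ↦ ?_⟩
  · obtain ⟨hik, hil, hjk, hjl⟩ := cross_ne_of_card_eq_four h4
    exact span_pair_inter_PhiB_of_disjoint hind hij hik hil hjk hjl hkl hε₁ hε₂ hε₃ hε₄ hα hβ
  · rcases cross_eq_of_card_eq_three hij hkl h3 with
      ⟨rfl, hjl⟩ | ⟨rfl, hjk⟩ | ⟨rfl, hil⟩ | ⟨rfl, hik⟩
    · rw [add_comm] at hα
      exact span_pair_inter_PhiB_of_shared hind hij.symm hjl hkl hε₂ hε₁ hε₃ hε₄ hα hβ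
    · rw [add_comm] at hα hβ
      exact span_pair_inter_PhiB_of_shared hind hij.symm hjk hkl.symm hε₂ hε₁ hε₄ hε₃ hα hβ
    · exact span_pair_inter_PhiB_of_shared hind hij hil hkl hε₁ hε₂ hε₃ hε₄ hα hβ
    · rw [add_comm] at hβ
      exact span_pair_inter_PhiB_of_shared hind hij hik hkl.symm hε₁ hε₂ hε₄ hε₃ hα hβ

/-- Two linearly independent long roots of `B_n` span a plane that contains exactly 4
roots (all long) if the corresponding basis vectors span a 4-dimensional space, and
exactly 6 roots (all long) if they span a 3-dimensional space. -/
theorem stmt2 (n : ℕ) (hn : 2 ≤ n) (i j k l : Fin n) (hij : i ≠ j) (hkl : k ≠ l)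
    (ε₁ ε₂ ε₃ ε₄ : ℝ)
    (hε₁ : ε₁ = 1 ∨ ε₁ = -1) (hε₂ : ε₂ = 1 ∨ ε₂ = -1)
    (hε₃ : ε₃ = 1 ∨ ε₃ = -1) (hε₄ : ε₄ = 1 ∨ ε₄ = -1)
    (α β : EuclideanSpace ℝ (Fin n))
    (hα : α = ε₁ • stdBasis n i + ε₂ • stdBasis n j)
    (hβ : β = ε₃ • stdBasis n k + ε₄ • stdBasis n l)
    (hind : LinearIndependent ℝ ![α, β])
    (P : Submodule ℝ (EuclideanSpace ℝ (Fin n)))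
    (hP : P = Submodule.span ℝ {α, β})
    (d : ℕ)
    (hd : d = Module.finrank ℝ
      (Submodule.span ℝ {stdBasis n i, stdBasis n j, stdBasis n k, stdBasis n l})) :
    (d = 4 → ((P : Set (EuclideanSpace ℝ (Fin n))) ∩ PhiB n).ncard = 4 ∧
      ∀ x ∈ (P : Set (EuclideanSpace ℝ (Fin n))) ∩ PhiB n, IsLongRoot n x) ∧
    (d = 3 → ((P : Set (EuclideanSpace ℝ (Fin n))) ∩ PhiB n).ncard = 6 ∧
      ∀ x ∈ (P : Set (EuclideanSpace ℝ (Fin n))) ∩ PhiB n, IsLongRoot n x) :=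
  stmt2_general n i j k l hij hkl ε₁ ε₂ ε₃ ε₄ hε₁ hε₂ hε₃ hε₄ α β hα hβ hind P hP d hd
end

section
/- Let 0 ≤ d_1 ≤ d_2 ≤ ⋯ ≤ d_n and 0 ≤ d_1' ≤ d_2' ≤ ⋯ ≤ d_n' be integers, and suppose φ: ℝ^n → ℝ^n is a linear isomorphism mapping the set Ξ = Z_{d_1} × ⋯ × Z_{d_n} onto the set Ξ' = Z_{d_1'} × ⋯ × Z_{d_n'}. Then d_i = d_i' for all 1 ≤ i ≤ n. -/
/-!
A linear map commutes with Minkowski sums, and `Z_a + Z_b = Z_(a+b)`; hence `φ` maps the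
`k`-fold sum `Z_(k d₁) × ⋯ × Z_(k dₙ)` onto `Z_(k d₁') × ⋯ × Z_(k dₙ')`. Counting points gives
`∏ (k dᵢ + 1) = ∏ (k dᵢ' + 1)` for every `k ≥ 1`, so the polynomials `∏ (X + dᵢ)` and
`∏ (X + dᵢ')` agree at every `1/k` and are equal. Their roots show that `(dᵢ)` and `(dᵢ')`
agree as multisets, and both being sorted, they agree termwise.
-/

/-- `Z_d = {-d, -d+2, …, d-2, d} = {k ∈ ℤ : |k| ≤ d, k ≡ d (mod 2)}`, as a subset of `ℝ`. -/
def Zset (d : ℕ) : Set ℝ :=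
  {x | ∃ k : ℤ, x = (k : ℝ) ∧ k.natAbs ≤ d ∧ k % 2 = (d : ℤ) % 2}

/-- The product `Z_{d 0} × ⋯ × Z_{d (n-1)}` as a subset of `ℝ^n`. -/
def Zprod {n : ℕ} (d : Fin n → ℕ) : Set (Fin n → ℝ) :=
  {x | ∀ i, x i ∈ Zset (d i)}

open Pointwise

noncomputable def zsetFinset (d : ℕ) : Finset ℝ :=
  (Finset.range (d + 1)).image fun j : ℕ => ((2 * j - d : ℤ) : ℝ)

theorem coe_zsetFinset (d : ℕ) : (zsetFinset d : Set ℝ) = Zset d := by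
  ext x
  simp only [Zset, zsetFinset, Finset.coe_image, Finset.coe_range, Set.mem_image, Set.mem_Iio,
    Set.mem_ofPred_eq]
  constructor
  · rintro ⟨j, hj, rfl⟩
    exact ⟨2 * j - d, rfl, by omega, by omega⟩
  · rintro ⟨k, rfl, hk, hpar⟩
    exact ⟨((k + d) / 2).toNat, by omega, by congr 1; omega⟩

theorem card_zsetFinset (d : ℕ) : (zsetFinset d).card = d + 1 := by
  rw [zsetFinset, Finset.card_image_of_injective _ fun i j h => by simp at h; omega,
    Finset.card_range]

theorem ncard_Zprod {n : ℕ} (d : Fin n → ℕ) : (Zprod d).ncard = ∏ i, (d i + 1) := by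
  have : Zprod d = Fintype.piFinset fun i => zsetFinset (d i) := by
    ext x
    simp [Zprod, ← coe_zsetFinset]
  rw [this, Set.ncard_coe_finset, Fintype.card_piFinset]
  simp only [card_zsetFinset]

theorem Zset_add (a b : ℕ) : Zset a + Zset b = Zset (a + b) := by
  ext x
  constructor
  · rintro ⟨_, ⟨k, rfl, hk, hkpar⟩, _, ⟨l, rfl, hl, hlpar⟩, rfl⟩
    exact ⟨k + l, by push_cast; ring, by omega, by omega⟩
  · rintro ⟨m, rfl, hm, hmpar⟩
    -- `u` is the least element of `Z_a` with `m - u ≤ b`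
    set u : ℤ := max (-a) (m - b)
    exact ⟨u, ⟨u, rfl, by omega, by omega⟩, (m - u : ℤ), ⟨m - u, rfl, by omega, by omega⟩,
      by push_cast; ring⟩

theorem Zprod_add {n : ℕ} (a b : Fin n → ℕ) : Zprod a + Zprod b = Zprod (a + b) := by
  ext x
  constructor
  · rintro ⟨u, hu, v, hv, rfl⟩ i
    exact Zset_add (a i) (b i) ▸ Set.add_mem_add (hu i) (hv i)
  · intro hx
    choose u hu v hv huv using fun i => (Zset_add (a i) (b i)).symm ▸ hx i
    exact ⟨u, hu, v, hv, funext huv⟩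

theorem image_Zprod_nsmul {n : ℕ} {F : Type*} [FunLike F (Fin n → ℝ) (Fin n → ℝ)]
    [AddHomClass F (Fin n → ℝ) (Fin n → ℝ)] (φ : F) {d d' : Fin n → ℕ}
    (h : φ '' Zprod d = Zprod d') (k : ℕ) :
    φ '' Zprod ((k + 1) • d) = Zprod ((k + 1) • d') := by
  induction k with
  | zero => simpa only [zero_add, one_smul] using h
  | succ k ih =>
    rw [succ_nsmul _ (k + 1), succ_nsmul _ (k + 1), ← Zprod_add, ← Zprod_add, Set.image_add, ih, h]

open Polynomial in
theorem Multiset.eq_of_infinite_setOf_prod_map_add_eq {R : Type*} [CommRing R] [IsDomain R]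
    {s t : Multiset R} (h : {x | (s.map (· + x)).prod = (t.map (· + x)).prod}.Infinite) :
    s = t := by
  have eval_eq (u : Multiset R) (x : R) :
      eval x ((u.map Neg.neg).map fun a => X - C a).prod = (u.map (· + x)).prod := by
    simp [eval_multiset_prod, Multiset.map_map, add_comm]
  have := congrArg roots <| eq_of_infinite_eval_eq
    ((s.map Neg.neg).map fun a => X - C a).prod ((t.map Neg.neg).map fun a => X - C a).prod
    (by simpa only [eval_eq] using h)
  rw [roots_multiset_prod_X_sub_C, roots_multiset_prod_X_sub_C] at this
  exact Multiset.map_injective neg_injective this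

theorem prod_add_inv_eq_prod_mul_add_one_div {ι : Type*} [Fintype ι] (c : ι → ℕ) (k : ℕ) :
    ∏ i, ((c i : ℝ) + ((k : ℝ) + 1)⁻¹) =
      ((∏ i, ((k + 1) * c i + 1) : ℕ) : ℝ) / ((k : ℝ) + 1) ^ Fintype.card ι := by
  rw [eq_div_iff (by positivity), ← Finset.card_univ, Finset.prod_mul_pow_card]
  push_cast
  refine Finset.prod_congr rfl fun i _ => ?_
  field_simp

theorem univ_val_map_cast_eq_of_prod_mul_add_one_eq {ι : Type*} [Fintype ι] {a b : ι → ℕ}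
    (h : ∀ k : ℕ, ∏ i, ((k + 1) * a i + 1) = ∏ i, ((k + 1) * b i + 1)) :
    Finset.univ.val.map (fun i => (a i : ℝ)) = Finset.univ.val.map (fun i => (b i : ℝ)) := by
  refine Multiset.eq_of_infinite_setOf_prod_map_add_eq <|
    Set.infinite_of_injective_forall_mem (f := fun k : ℕ => ((k : ℝ) + 1)⁻¹)
      (fun k l hkl => by simpa using hkl) fun k => ?_
  simp only [Set.mem_ofPred_eq, Multiset.map_map, Function.comp_def, Finset.prod_map_val,
    prod_add_inv_eq_prod_mul_add_one_div, h]

theorem Monotone.eq_of_univ_val_map_eq {α : Type*} [PartialOrder α] {n : ℕ} {f g : Fin n → α}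
    (hf : Monotone f) (hg : Monotone g) (h : Finset.univ.val.map f = Finset.univ.val.map g) :
    f = g :=
  List.ofFn_injective <| List.Perm.eq_of_sortedLE hf.sortedLE_ofFn hg.sortedLE_ofFn <|
    Multiset.coe_eq_coe.mp (by simpa only [Fin.univ_val_map] using h)

/-- If a linear isomorphism of `ℝ^n` maps `Z_{d₁} × ⋯ × Z_{dₙ}` onto
`Z_{d₁'\''} × ⋯ × Z_{dₙ'\''}`, the `dᵢ` being nondecreasing, then `dᵢ = dᵢ'\''` for all `i`. -/
theorem stmt7 (n : ℕ) (d d' : Fin n → ℕ) (hd : Monotone d) (hd' : Monotone d')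
    (φ : (Fin n → ℝ) ≃ₗ[ℝ] (Fin n → ℝ))
    (hφ : φ '' Zprod d = Zprod d') :
    ∀ i, d i = d' i := by
  have hcard (k : ℕ) : ∏ i, ((k + 1) * d i + 1) = ∏ i, ((k + 1) * d' i + 1) := by
    have := Set.ncard_image_of_injective (Zprod ((k + 1) • d)) φ.injective
    rw [image_Zprod_nsmul φ hφ, ncard_Zprod, ncard_Zprod] at this
    simpa only [Pi.smul_apply, smul_eq_mul] using this.symm
  have hcast := (Nat.mono_cast.comp hd).eq_of_univ_val_map_eq (Nat.mono_cast.comp hd')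
    (univ_val_map_cast_eq_of_prod_mul_add_one_eq hcard)
  exact fun i => Nat.cast_injective (R := ℝ) (congrFun hcast i)
end

section
/- Let 0 < d_1 ≤ d_2 ≤ ⋯ ≤ d_n and 0 < d_1' ≤ d_2' ≤ ⋯ ≤ d_n' be integers, and suppose φ: ℝ^n → ℝ^n is a linear isomorphism mapping Z_{d_1} × ⋯ × Z_{d_n} onto Z_{d_1'} × ⋯ × Z_{d_n'}. Then for every index i there exists an index j such that φ(e_i) = e_j or φ(e_i) = −e_j, and d_i = d_j'. -/
open Set Matrix

theorem exists_zset_sub_eq_two_mul {d : ℕ} {k : ℤ} (hk : |k| ≤ d) :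
    ∃ a ∈ Zset d, ∃ b ∈ Zset d, a - b = 2 * k := by
  rw [abs_le] at hk
  set r := ((d : ℤ) - k) % 2
  refine ⟨(k + r : ℤ), ⟨k + r, rfl, by omega, by omega⟩,
    (r - k : ℤ), ⟨r - k, rfl, by omega, by omega⟩, by push_cast; ring⟩

theorem exists_two_mul_eq_of_zset {d : ℕ} {a b : ℝ} (ha : a ∈ Zset d) (hb : b ∈ Zset d) :
    ∃ k : ℤ, a - b = 2 * k ∧ |k| ≤ d := by
  obtain ⟨m, rfl, hm, hmd⟩ := ha
  obtain ⟨m', rfl, hm', hm'd⟩ := hb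
  refine ⟨(m - m') / 2, ?_, abs_le.mpr ⟨by omega, by omega⟩⟩
  exact_mod_cast (by omega : m - m' = 2 * ((m - m') / 2))

def intBox {ι : Type*} (d : ι → ℕ) : Set (ι → ℝ) :=
  {x | ∀ i, ∃ k : ℤ, x i = k ∧ |k| ≤ d i}

theorem single_mem_intBox {ι : Type*} [DecidableEq ι] {d : ι → ℕ} {i : ι} (hd : 0 < d i) :
    Pi.single i 1 ∈ intBox d := by
  intro j
  rcases eq_or_ne j i with rfl | hj
  · exact ⟨1, by simp, by simp; omega⟩
  · exact ⟨0, by simp [hj], by simp⟩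

theorem mapsTo_intBox {n m : ℕ} {d : Fin n → ℕ} {d' : Fin m → ℕ}
    {ψ : (Fin n → ℝ) →ₗ[ℝ] (Fin m → ℝ)} (hψ : MapsTo ψ (Zprod d) (Zprod d')) :
    MapsTo ψ (intBox d) (intBox d') := by
  intro x hx
  choose k hxk hk using hx
  choose u hu v hv huv using fun i => exists_zset_sub_eq_two_mul (hk i)
  have hx : x = (2 : ℝ)⁻¹ • (u - v) := by
    ext i
    simp [huv, hxk]
  intro j
  obtain ⟨l, hl, hld⟩ := exists_two_mul_eq_of_zset (hψ hu j) (hψ hv j)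
  refine ⟨l, ?_, hld⟩
  simp only [hx, map_smul, map_sub, Pi.smul_apply, Pi.sub_apply, hl, smul_eq_mul]
  ring

theorem exists_intMatrix_of_mapsTo_intBox {ι κ : Type*} [Fintype ι] [DecidableEq ι]
    {d : ι → ℕ} {d' : κ → ℕ} (hd : ∀ i, 0 < d i) {ψ : (ι → ℝ) →ₗ[ℝ] (κ → ℝ)}
    (hψ : MapsTo ψ (intBox d) (intBox d')) :
    ∃ A : Matrix κ ι ℤ, A.map (↑) = LinearMap.toMatrix' ψ ∧
      ∀ k, ∑ i, |A k i| * (d i : ℤ) ≤ d' k := by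
  choose A hA using fun k i => (hψ (single_mem_intBox (hd i)) k).imp fun _ h => h.1
  have hψA : LinearMap.toMatrix' ψ = (Matrix.of A).map (↑) := by
    ext k i
    simp [LinearMap.toMatrix'_apply, hA]
  refine ⟨Matrix.of A, hψA.symm, fun k => ?_⟩
  -- evaluate `ψ` at the integer point whose coordinates are `± dᵢ`, with the signs of row `k`
  set x : ι → ℝ := fun i => ((A k i).sign * d i : ℤ)
  have hx : x ∈ intBox d := fun i =>
    ⟨_, rfl, by rcases Int.sign_trichotomy (A k i) with h | h | h <;> simp [h]⟩
  obtain ⟨m, hm, hmd⟩ := hψ hx k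
  have hψx : ψ x k = ((∑ i, |A k i| * (d i : ℤ) : ℤ) : ℝ) := by
    have hterm : ∀ i, A k i * ((A k i).sign * d i) = |A k i| * d i := fun i => by
      rw [← Int.sign_mul_self_eq_abs]; ring
    rw [← LinearMap.toMatrix'_mulVec, hψA]
    simp only [mulVec, dotProduct, map_apply, of_apply, x]
    exact_mod_cast Finset.sum_congr rfl fun i _ => hterm i
  have : ∑ i, |A k i| * (d i : ℤ) = m := by exact_mod_cast hψx.symm.trans hm
  exact this ▸ (le_abs_self m).trans hmd

theorem exists_row_eq_single_of_weighted_bounds {ι κ : Type*} [Fintype ι] [Fintype κ]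
    {w : ι → ℕ} {w' : κ → ℕ} (hw : ∀ i, 0 < w i) {A : Matrix κ ι ℤ} {C : Matrix ι κ ℤ}
    (hA : ∀ k, ∑ i, |A k i| * (w i : ℤ) ≤ w' k) (hC : ∀ i, ∑ k, |C i k| * (w' k : ℤ) ≤ w i)
    {i : ι} (hCA : (C * A) i i ≠ 0) :
    ∃ k, |A k i| = 1 ∧ w i = w' k ∧ ∀ i' ≠ i, A k i' = 0 := by
  obtain ⟨k, -, hk⟩ := Finset.exists_ne_zero_of_sum_ne_zero hCA
  have hAk : 1 ≤ |A k i| := Int.one_le_abs (right_ne_zero_of_mul hk)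
  have hCk : 1 ≤ |C i k| := Int.one_le_abs (left_ne_zero_of_mul hk)
  have hAki : |A k i| * (w i : ℤ) ≤ w' k :=
    (Finset.single_le_sum (fun _ _ => by positivity) (Finset.mem_univ i)).trans (hA k)
  have hCik : |C i k| * (w' k : ℤ) ≤ w i :=
    (Finset.single_le_sum (fun _ _ => by positivity) (Finset.mem_univ k)).trans (hC i)
  -- `w i ≤ |A k i| w i ≤ w' k ≤ |C i k| w' k ≤ w i`
  have hwi : (0 : ℤ) < w i := by exact_mod_cast hw i
  have hw' : (w i : ℤ) = w' k := by nlinarith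
  have hAk1 : |A k i| = 1 := by nlinarith
  refine ⟨k, hAk1, by exact_mod_cast hw', fun i' hi' => ?_⟩
  classical
  have hpair : |A k i| * (w i : ℤ) + |A k i'| * w i' ≤ w' k := by
    rw [← Finset.sum_pair (f := fun j => |A k j| * (w j : ℤ)) hi'.symm]
    exact (Finset.sum_le_sum_of_subset_of_nonneg (Finset.subset_univ _)
      fun _ _ _ => by positivity).trans (hA k)
  have hwi' : (0 : ℤ) < w i' := by exact_mod_cast hw i'
  have : |A k i'| * (w i' : ℤ) ≤ 0 := by rw [hAk1] at hpair; linarith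
  exact abs_nonpos_iff.mp (nonpos_of_mul_nonpos_left this hwi')

theorem eq_zero_of_ne_of_rows_eq_single {ι R : Type*} [Finite ι] [Zero R] {A : Matrix ι ι R}
    {f : ι → ι} (hf : ∀ i, A (f i) i ≠ 0) (hrow : ∀ i, ∀ i' ≠ i, A (f i) i' = 0)
    {i k : ι} (hk : k ≠ f i) : A k i = 0 := by
  have hinj : Function.Injective f := fun i₁ i₂ h => by_contra fun hne => hf i₁ (h ▸ hrow i₂ i₁ hne)
  obtain ⟨i', rfl⟩ := Finite.injective_iff_surjective.mp hinj k
  exact hrow i' i fun h => hk (h ▸ rfl)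

theorem intCast_eq_single_or_eq_neg_single {ι : Type*} [DecidableEq ι] {v : ι → ℤ} {j : ι}
    (hj : |v j| = 1) (hv : ∀ k ≠ j, v k = 0) :
    (fun k => (v k : ℝ)) = Pi.single j 1 ∨ (fun k => (v k : ℝ)) = -Pi.single j 1 := by
  have hsingle : (fun k => (v k : ℝ)) = Pi.single j (v j : ℝ) := by
    ext k
    rcases eq_or_ne k j with rfl | hk
    · simp
    · simp [hk, hv k hk]
  rcases abs_eq (zero_le_one' ℤ) |>.mp hj with h | h
  · left; simp [hsingle, h]
  · right; simp [hsingle, h, Pi.single_neg]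

theorem stmt8_general (n : ℕ) (d d' : Fin n → ℕ)
    (hdpos : ∀ i, 0 < d i) (hd'pos : ∀ i, 0 < d' i)
    (φ : (Fin n → ℝ) ≃ₗ[ℝ] (Fin n → ℝ))
    (hφ : φ '' Zprod d = Zprod d') :
    ∀ i, ∃ j, (φ (Pi.single i 1) = Pi.single j 1 ∨ φ (Pi.single i 1) = -Pi.single j 1) ∧
      d i = d' j := by
  have hfwd : MapsTo φ.toLinearMap (Zprod d) (Zprod d') := hφ ▸ mapsTo_image φ (Zprod d)
  have hbwd : MapsTo φ.symm.toLinearMap (Zprod d') (Zprod d) := by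
    rw [← hφ]
    rintro _ ⟨x, hx, rfl⟩
    simpa using hx
  obtain ⟨A, hAφ, hA⟩ := exists_intMatrix_of_mapsTo_intBox hdpos (mapsTo_intBox hfwd)
  obtain ⟨C, hCφ, hC⟩ := exists_intMatrix_of_mapsTo_intBox hd'pos (mapsTo_intBox hbwd)
  have hCA : C * A = 1 := by
    apply map_injective (f := (Int.cast : ℤ → ℝ)) Int.cast_injective
    change (C * A).map (Int.castRingHom ℝ) = (1 : Matrix _ _ ℤ).map (Int.castRingHom ℝ)
    rw [Matrix.map_mul, Int.coe_castRingHom, hAφ, hCφ, ← LinearMap.toMatrix'_comp]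
    simp
  choose f hf hdf hrow using fun i =>
    exists_row_eq_single_of_weighted_bounds hdpos hA hC (i := i) (by simp [hCA])
  have hf0 : ∀ i, A (f i) i ≠ 0 := fun i => abs_ne_zero.mp (by simp [hf i])
  intro i
  have hφi : φ (Pi.single i 1) = fun k => (A k i : ℝ) := by
    ext k
    simpa [LinearMap.toMatrix'_apply] using congrFun (congrFun hAφ k) i |>.symm
  rw [hφi]
  exact ⟨f i, intCast_eq_single_or_eq_neg_single (v := fun k => A k i) (hf i)
    (fun k hk => eq_zero_of_ne_of_rows_eq_single hf0 hrow hk), hdf i⟩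

/-- If a linear isomorphism of `ℝ^n` maps `Z_{d₁} × ⋯ × Z_{dₙ}` onto
`Z_{d₁'\''} × ⋯ × Z_{dₙ'\''}`, with all `dᵢ, dᵢ'\'' > 0` nondecreasing, then each standard basis
vector `eᵢ` is mapped to `± e_j` for some `j` with `dᵢ = d_j'\''`. -/
theorem stmt8 (n : ℕ) (d d' : Fin n → ℕ) (hd : Monotone d) (hd' : Monotone d')
    (hdpos : ∀ i, 0 < d i) (hd'pos : ∀ i, 0 < d' i)
    (φ : (Fin n → ℝ) ≃ₗ[ℝ] (Fin n → ℝ))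
    (hφ : φ '' Zprod d = Zprod d') :
    ∀ i, ∃ j, (φ (Pi.single i 1) = Pi.single j 1 ∨ φ (Pi.single i 1) = -Pi.single j 1) ∧
      d i = d' j :=
  stmt8_general n d d' hdpos hd'pos φ hφ
end

section
/- Let 0 < k_1 < k_2 < ⋯ < k_r and 0 < ℓ_1 < ℓ_2 < ⋯ < ℓ_s be integers, let n_1, …, n_r and m_1, …, m_s be positive integers with n = n_1 + ⋯ + n_r = m_1 + ⋯ + m_s, and suppose φ: ℝ^n → ℝ^n is a linear isomorphism mapping M_{k_1}^{n_1} × ⋯ × M_{k_r}^{n_r} onto M_{ℓ_1}^{m_1} × ⋯ × M_{ℓ_s}^{m_s}. Then k_r = ℓ_s, n_r = m_s, and φ maps the subset {0_{ℝ^{n−n_r}}} × M_{k_r}^{n_r} (vectors whose first n − n_r coordinates vanish and whose last n_r coordinates lie in M_{k_r}) onto {0_{ℝ^{n−m_s}}} × M_{ℓ_s}^{m_s}. -/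
/-! Call `x` an `A`-multiple point of `S` if `0, x, 2x, …, Ax ∈ S`; this notion is preserved by
additive isomorphisms. If `x ≠ 0` is an `A`-multiple point of the box
`P = M_{k_1}^{n_1} × ⋯ × M_{k_r}^{n_r}` and `x_i ≠ 0`, then `x_i` is a nonzero integer with
`A x_i ∈ M_{k_i}`, so `A ≤ k_i ≤ k_r`; the unit vectors `e_i` are `k_i`-multiple points. Hence `k_r`
is the largest `A` for which `P` has a nonzero `A`-multiple point, and the `k_r`-multiple points
of `P` span exactly the coordinate subspace of the last block. A linear isomorphism carrying one
box onto the other therefore matches the top bounds and these subspaces, and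
`{0} × M_{k_r}^{n_r}` is that subspace intersected with `P`. -/

/-- `M_d = {x ∈ ℤ : -d ≤ x ≤ d}`, as a subset of `ℝ`. -/
def Mset (d : ℕ) : Set ℝ :=
  {x | ∃ k : ℤ, x = (k : ℝ) ∧ k.natAbs ≤ d}

/-- The product `M_{a 0} × ⋯ × M_{a (n-1)}` as a subset of `ℝ^n`.  A product of blocks
`M_{k_1}^{n_1} × ⋯ × M_{k_r}^{n_r}` with `0 < k_1 < ⋯ < k_r` corresponds to a monotone
positive coordinate-bound function `a : Fin n → ℕ`; then `k_r = a (n-1)` and the last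
block consists of the coordinates `i` with `a i = a (n-1)`. -/
def Mprod {n : ℕ} (a : Fin n → ℕ) : Set (Fin n → ℝ) :=
  {x | ∀ i, x i ∈ Mset (a i)}

open Module Submodule

section Multiples

variable {M N : Type*} [AddMonoid M] [AddMonoid N]

def multiplesIn (S : Set M) (A : ℕ) : Set M :=
  {x | ∀ j ≤ A, j • x ∈ S}

theorem AddEquiv.image_multiplesIn (e : M ≃+ N) (S : Set M) (A : ℕ) :
    e '' multiplesIn S A = multiplesIn (e '' S) A := by
  ext y
  constructor
  · rintro ⟨x, hx, rfl⟩ j hj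
    exact ⟨j • x, hx j hj, map_nsmul e j x⟩
  · intro hy
    refine ⟨e.symm y, fun j hj => ?_, e.apply_symm_apply y⟩
    obtain ⟨x, hx, hxy⟩ := hy j hj
    rwa [← map_nsmul, ← hxy, e.symm_apply_apply]

end Multiples

theorem Pi.finrank_spanSubset_setOf {R η : Type*} [Semiring R] [Nontrivial R]
    [StrongRankCondition R] [Fintype η] (p : η → Prop) [DecidablePred p] :
    finrank R (Pi.spanSubset R {i | p i}) = (Finset.univ.filter p).card := by
  rw [Pi.spanSubset, Set.image_eq_range, ← Fintype.card_subtype]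
  exact finrank_span_eq_card ((Pi.basisFun R η).linearIndependent.comp _ Subtype.val_injective)

theorem zero_mem_Mset (d : ℕ) : (0 : ℝ) ∈ Mset d := ⟨0, by simp, by simp⟩

theorem natCast_mem_Mset {j d : ℕ} (h : j ≤ d) : (j : ℝ) ∈ Mset d := ⟨j, by simp, by simpa using h⟩

theorem le_of_nsmul_mem_Mset {x : ℝ} {e d t : ℕ} (hx : x ∈ Mset e) (hx0 : x ≠ 0)
    (ht : t • x ∈ Mset d) : t ≤ d := by
  obtain ⟨m, rfl, -⟩ := hx
  obtain ⟨k, hk, hkd⟩ := ht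
  have hkm : k = t * m := by exact_mod_cast (by simpa using hk.symm : (k : ℝ) = t * m)
  have hm : 1 ≤ m.natAbs := Int.natAbs_pos.mpr (by rintro rfl; simp at hx0)
  rw [hkm, Int.natAbs_mul, Int.natAbs_natCast] at hkd
  calc t ≤ t * m.natAbs := Nat.le_mul_of_pos_right t hm
    _ ≤ d := hkd

section Mprod

variable {n : ℕ}

theorem nsmul_single_mem_Mprod {c : Fin n → ℕ} {i : Fin n} {j : ℕ} (hj : j ≤ c i) :
    j • Pi.single i (1 : ℝ) ∈ Mprod c := by
  intro i'
  rcases eq_or_ne i' i with rfl | h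
  · simpa using natCast_mem_Mset hj
  · simpa [h] using zero_mem_Mset (c i')

theorem single_mem_multiplesIn_Mprod (c : Fin n → ℕ) (i : Fin n) :
    Pi.single i (1 : ℝ) ∈ multiplesIn (Mprod c) (c i) :=
  fun _ hj => nsmul_single_mem_Mprod hj

theorem le_of_mem_multiplesIn_Mprod {c : Fin n → ℕ} {x : Fin n → ℝ} {t : ℕ} {i : Fin n}
    (hx : x ∈ multiplesIn (Mprod c) t) (hxi : x i ≠ 0) : t ≤ c i := by
  rcases Nat.eq_zero_or_pos t with rfl | ht
  · exact Nat.zero_le _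
  · exact le_of_nsmul_mem_Mset (by simpa using hx 1 ht i) hxi (hx t le_rfl i)

theorem span_multiplesIn_Mprod {c : Fin n → ℕ} {d : ℕ} (hc : ∀ i, c i ≤ d) :
    span ℝ (multiplesIn (Mprod c) d) = Pi.spanSubset ℝ {i | c i = d} := by
  apply le_antisymm
  · refine span_le.mpr fun x hx => Pi.mem_spanSubset_iff.mpr fun i hi => ?_
    by_contra hxi
    exact hi (le_antisymm (hc i) (le_of_mem_multiplesIn_Mprod hx hxi))
  · refine span_mono ?_
    rintro _ ⟨i, hi, rfl⟩
    rw [Pi.basisFun_apply, ← hi.out]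
    exact single_mem_multiplesIn_Mprod c i

theorem le_of_image_Mprod_eq {a b : Fin n → ℕ} {d : ℕ} (e : (Fin n → ℝ) ≃+ (Fin n → ℝ))
    (he : e '' Mprod a = Mprod b) (hb : ∀ i, b i ≤ d) (i : Fin n) : a i ≤ d := by
  have hmem : e (Pi.single i 1) ∈ multiplesIn (Mprod b) (a i) := by
    rw [← he, ← e.image_multiplesIn]
    exact Set.mem_image_of_mem e (single_mem_multiplesIn_Mprod a i)
  obtain ⟨j, hj⟩ := Function.ne_iff.mp ((map_ne_zero_iff e e.injective).mpr
    (Pi.single_ne_zero_iff.mpr one_ne_zero))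
  exact (le_of_mem_multiplesIn_Mprod hmem hj).trans (hb j)

theorem map_spanSubset_eq_of_image_Mprod_eq {a b : Fin n → ℕ} {d : ℕ}
    (φ : (Fin n → ℝ) ≃ₗ[ℝ] (Fin n → ℝ)) (hφ : φ '' Mprod a = Mprod b)
    (ha : ∀ i, a i ≤ d) (hb : ∀ i, b i ≤ d) :
    (Pi.spanSubset ℝ {i | a i = d}).map (φ : (Fin n → ℝ) →ₗ[ℝ] (Fin n → ℝ)) =
      Pi.spanSubset ℝ {i | b i = d} := by
  rw [← span_multiplesIn_Mprod ha, ← span_multiplesIn_Mprod hb, map_span, LinearEquiv.coe_coe]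
  exact congrArg (span ℝ)
    ((φ.toAddEquiv.image_multiplesIn _ d).trans (congrArg (multiplesIn · d) hφ))

theorem setOf_ite_mem_Mset_eq_spanSubset_inter_Mprod (c : Fin n → ℕ) (d : ℕ) :
    {x : Fin n → ℝ | ∀ i, if c i = d then x i ∈ Mset (c i) else x i = 0} =
      (Pi.spanSubset ℝ {i | c i = d} : Set (Fin n → ℝ)) ∩ Mprod c := by
  ext x
  simp only [Set.mem_ofPred, Set.mem_inter_iff, SetLike.mem_coe, Pi.mem_spanSubset_iff, Mprod]
  refine ⟨fun h => ⟨fun i hi => by simpa [hi] using h i, fun i => ?_⟩, fun ⟨h0, h⟩ i => ?_⟩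
  · by_cases hi : c i = d
    · simpa [hi] using h i
    · simpa [(by simpa [hi] using h i : x i = 0)] using zero_mem_Mset (c i)
  · by_cases hi : c i = d
    · simpa [hi] using h i
    · simpa [hi] using h0 i hi

end Mprod

/-- If a linear isomorphism of `ℝ^n` maps `M_{k_1}^{n_1} × ⋯ × M_{k_r}^{n_r}` onto
`M_{ℓ_1}^{m_1} × ⋯ × M_{ℓ_s}^{m_s}` (both encoded by monotone positive coordinate-bound
functions `a`, `b`), then `k_r = ℓ_s`, `n_r = m_s`, and `φ` maps
`{0} × M_{k_r}^{n_r}` onto `{0} × M_{ℓ_s}^{m_s}`. -/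
theorem stmt9 (n : ℕ) (hn : 0 < n) (a b : Fin n → ℕ)
    (ha : Monotone a) (hb : Monotone b)
    (φ : (Fin n → ℝ) ≃ₗ[ℝ] (Fin n → ℝ))
    (hφ : φ '' Mprod a = Mprod b) :
    a ⟨n - 1, by omega⟩ = b ⟨n - 1, by omega⟩ ∧
    (Finset.univ.filter fun i => a i = a ⟨n - 1, by omega⟩).card =
      (Finset.univ.filter fun i => b i = b ⟨n - 1, by omega⟩).card ∧
    φ '' {x | ∀ i, if a i = a ⟨n - 1, by omega⟩ then x i ∈ Mset (a i) else x i = 0} =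
      {x | ∀ i, if b i = b ⟨n - 1, by omega⟩ then x i ∈ Mset (b i) else x i = 0} := by
  set N : Fin n := ⟨n - 1, by omega⟩
  have hN (i : Fin n) : i ≤ N := Fin.mk_le_mk.mpr (by omega)
  have haN (i : Fin n) : a i ≤ a N := ha (hN i)
  have hbN (i : Fin n) : b i ≤ b N := hb (hN i)
  have hφ_symm : φ.symm '' Mprod b = Mprod a := by
    rw [← hφ]; exact φ.toEquiv.symm_image_image _
  have htop : a N = b N := le_antisymm (le_of_image_Mprod_eq φ.toAddEquiv hφ hbN N)
    (le_of_image_Mprod_eq φ.symm.toAddEquiv hφ_symm haN N)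
  rw [← htop] at hbN ⊢
  have hV := map_spanSubset_eq_of_image_Mprod_eq φ hφ haN hbN
  refine ⟨rfl, ?_, ?_⟩
  · rw [← Pi.finrank_spanSubset_setOf (R := ℝ), ← Pi.finrank_spanSubset_setOf (R := ℝ), ← hV,
      LinearEquiv.finrank_map_eq]
  · rw [setOf_ite_mem_Mset_eq_spanSubset_inter_Mprod, setOf_ite_mem_Mset_eq_spanSubset_inter_Mprod,
      Set.image_inter φ.injective, hφ, ← hV, Submodule.map_coe, LinearEquiv.coe_coe]
end

section
/- Let d ≥ 1 and n ≥ 1 be integers and let φ: ℝ^n → ℝ^n be a linear isomorphism with φ(Z_d^n) = Z_d^n. Then there exist a permutation σ of {1, …, n} and signs ε_1, …, ε_n ∈ {+1, −1} such that φ(e_i) = ε_i e_{σ(i)} for all i. In particular, the group {φ ∈ GL_n(ℝ) : φ(Z_d^n) = Z_d^n} has order 2^n · n!. -/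
def Zcube (d n : ℕ) : Set (Fin n → ℝ) :=
  {x | ∀ i, x i ∈ Zset d}

open Set Function

namespace Zset

variable {d : ℕ} {x : ℝ}

lemma abs_le_of_mem (hx : x ∈ Zset d) : |x| ≤ d := by
  obtain ⟨k, rfl, hk, -⟩ := hx
  rw [← Int.cast_abs, Int.abs_eq_natAbs]
  exact_mod_cast hk

lemma add_two_mem (hx : x ∈ Zset d) (hlt : x < d) : x + 2 ∈ Zset d := by
  obtain ⟨k, rfl, hk, hpar⟩ := hx
  have : k < d := by exact_mod_cast hlt
  exact ⟨k + 2, by push_cast; ring, by omega, by omega⟩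

lemma sub_two_mem (hx : x ∈ Zset d) (hlt : -(d : ℝ) < x) : x - 2 ∈ Zset d := by
  obtain ⟨k, rfl, hk, hpar⟩ := hx
  have : -(d : ℤ) < k := by exact_mod_cast hlt
  exact ⟨k - 2, by push_cast; ring, by omega, by omega⟩

lemma natCast_mem : (d : ℝ) ∈ Zset d := ⟨d, by simp, by simp, rfl⟩

lemma neg_mem (hx : x ∈ Zset d) : -x ∈ Zset d := by
  obtain ⟨k, rfl, hk, hpar⟩ := hx
  exact ⟨-k, by push_cast; ring, by omega, by omega⟩

@[simp]
lemma neg_mem_iff : -x ∈ Zset d ↔ x ∈ Zset d :=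
  ⟨fun h => by simpa using neg_mem h, neg_mem⟩

lemma units_mul_mem_iff (u : ℤˣ) : (u : ℝ) * x ∈ Zset d ↔ x ∈ Zset d := by
  rcases Int.units_eq_one_or u with rfl | rfl <;> simp

theorem extremePoints_eq : (Zset d).extremePoints ℝ = {(d : ℝ), -(d : ℝ)} := by
  ext x
  simp only [mem_extremePoints_iff_left, mem_insert_iff, mem_singleton_iff]
  constructor
  · rintro ⟨hx, hext⟩
    by_contra! hne
    have hlt : |x| < d := (abs_le_of_mem hx).lt_of_ne (by cases abs_cases x <;> grind)
    rw [abs_lt] at hlt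
    have := hext _ (sub_two_mem hx hlt.1) _ (add_two_mem hx hlt.2)
      (by rw [openSegment_eq_Ioo (by linarith)]; constructor <;> linarith)
    linarith
  · intro hx
    refine ⟨by rcases hx with rfl | rfl; exacts [natCast_mem, neg_mem natCast_mem],
      fun x₁ h₁ x₂ h₂ ⟨a, b, ha, hb, hab, hseg⟩ => ?_⟩
    have := _root_.abs_le.mp (abs_le_of_mem h₁)
    have := _root_.abs_le.mp (abs_le_of_mem h₂)
    rw [smul_eq_mul, smul_eq_mul] at hseg
    rcases hx with rfl | rfl <;> nlinarith

end Zset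

def cubeVertices {ι : Type*} (c : ℝ) : Set (ι → ℝ) := univ.pi fun _ => {c, -c}

theorem Zcube_eq_pi (d n : ℕ) : Zcube d n = univ.pi fun _ => Zset d := by
  ext; simp [Zcube]

theorem extremePoints_Zcube (d n : ℕ) : (Zcube d n).extremePoints ℝ = cubeVertices d := by
  rw [Zcube_eq_pi, extremePoints_pi, cubeVertices]
  simp only [Zset.extremePoints_eq]

lemma LinearEquiv.mapsTo_extremePoints_of_image_eq {E : Type*} [AddCommGroup E] [Module ℝ E]
    (φ : E ≃ₗ[ℝ] E) {S : Set E} (h : φ '' S = S) :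
    MapsTo φ (S.extremePoints ℝ) (S.extremePoints ℝ) := by
  intro x hx
  rw [← h, ← image_extremePoints]
  exact mem_image_of_mem φ hx

section CubeVertices

variable {ι : Type*} [DecidableEq ι] {c : ℝ}

lemma const_sub_single_mem_cubeVertices (k : ι) :
    const ι c - Pi.single k (2 * c) ∈ cubeVertices c := by
  intro i _
  rcases eq_or_ne i k with rfl | hik
  · right; simp only [Pi.sub_apply, const_apply, Pi.single_eq_same, mem_singleton_iff]; ring
  · left; simp [hik]

lemma const_sub_single_sub_single_mem_cubeVertices {k l : ι} (hkl : k ≠ l) :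
    const ι c - Pi.single k (2 * c) - Pi.single l (2 * c) ∈ cubeVertices c := by
  intro i _
  rcases eq_or_ne i k with rfl | hik
  · right
    simp only [Pi.sub_apply, const_apply, Pi.single_eq_same, Pi.single_eq_of_ne hkl, sub_zero,
      mem_singleton_iff]
    ring
  rcases eq_or_ne i l with rfl | hil
  · right
    simp only [Pi.sub_apply, const_apply, Pi.single_eq_same, Pi.single_eq_of_ne hik, sub_zero,
      mem_singleton_iff]
    ring
  · left; simp [hik, hil]

lemma LinearMap.apply_single_eq_div_mul (hc : c ≠ 0) (f : (ι → ℝ) →ₗ[ℝ] ℝ) (i : ι) (r : ℝ) :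
    f (Pi.single i r) = r / c * f (Pi.single i c) := by
  rw [← smul_eq_mul, ← map_smul, ← Pi.single_smul', smul_eq_mul, div_mul_cancel₀ r hc]

theorem exists_eq_unit_mul_apply_of_mapsTo_cubeVertices [Finite ι] (hc : 0 < c)
    (f : (ι → ℝ) →ₗ[ℝ] ℝ) (hf : MapsTo f (cubeVertices c) {c, -c}) :
    ∃ (k : ι) (ε : ℤˣ), ∀ x, f x = ε * x k := by
  set F := f (const ι c)
  have hF : F = c ∨ F = -c := hf fun _ _ => .inl rfl
  -- flipping the sign of the `i`-th coordinate of `(c, …, c)` lowers `f` by `2 f (c eᵢ)`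
  have hflip (i : ι) : f (Pi.single i c) = 0 ∨ f (Pi.single i c) = F := by
    have := hf (const_sub_single_mem_cubeVertices i)
    simp only [map_sub, two_mul, Pi.single_add, map_add, mem_insert_iff, mem_singleton_iff] at this
    rcases this with h | h <;> rcases hF with h' | h' <;> grind
  -- flipping two such coordinates would take `F` to `-3F`
  have huniq (k l : ι) (hk : f (Pi.single k c) = F) (hl : f (Pi.single l c) = F) : k = l := by
    by_contra hkl
    have := hf (const_sub_single_sub_single_mem_cubeVertices (c := c) hkl)
    simp only [map_sub, two_mul, Pi.single_add, map_add, mem_insert_iff, mem_singleton_iff] at this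
    rcases this with h | h <;> rcases hF with h' | h' <;> linarith
  obtain ⟨k, hk⟩ : ∃ k, f (Pi.single k c) = F := by
    by_contra! h
    have hf0 : f = 0 := LinearMap.pi_ext fun i r => by
      rw [LinearMap.zero_apply, f.apply_single_eq_div_mul hc.ne', (hflip i).resolve_right (h i),
        mul_zero]
    have : F = 0 := by simp [F, hf0]
    rcases hF with h' | h' <;> linarith
  have hproj : f = (F / c) • LinearMap.proj k := by
    refine LinearMap.pi_ext fun i r => ?_
    rw [f.apply_single_eq_div_mul hc.ne']
    rcases eq_or_ne i k with rfl | hik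
    · simp [hk, div_mul_comm]
    · simp [(hflip i).resolve_right fun h => hik (huniq i k h hk), hik]
  obtain ⟨ε, hε⟩ : ∃ ε : ℤˣ, (ε : ℝ) = F / c := by
    rcases hF with h | h
    exacts [⟨1, by simp [h, hc.ne']⟩, ⟨-1, by simp [h, hc.ne']⟩]
  exact ⟨k, ε, fun x => by rw [hproj, hε]; rfl⟩

end CubeVertices

section SignedPerm

variable {ι : Type*}

def signedPerm (τ : Equiv.Perm ι) (ε : ι → ℤˣ) : (ι → ℝ) ≃ₗ[ℝ] (ι → ℝ) :=
  (LinearEquiv.funCongrLeft ℝ ℝ τ).trans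
    (LinearEquiv.piCongrRight fun j => .smulOfUnit (Units.map (Int.castRingHom ℝ) (ε j)))

@[simp]
lemma signedPerm_apply (τ : Equiv.Perm ι) (ε : ι → ℤˣ) (x : ι → ℝ) (j : ι) :
    signedPerm τ ε x j = ε j * x (τ j) :=
  rfl

lemma signedPerm_single [DecidableEq ι] (τ : Equiv.Perm ι) (ε : ι → ℤˣ) (i : ι) :
    signedPerm τ ε (Pi.single i 1) = (ε (τ.symm i) : ℝ) • Pi.single (τ.symm i) 1 := by
  ext j
  rcases eq_or_ne j (τ.symm i) with rfl | hj
  · simp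
  · have : τ j ≠ i := fun h => hj (τ.eq_symm_apply.mpr h)
    simp [hj, this]

lemma signedPerm_injective : Injective (uncurry (signedPerm (ι := ι))) := by
  classical
  rintro ⟨τ, ε⟩ ⟨τ', ε'⟩ h
  simp only [uncurry_apply_pair] at h
  have key (j : ι) : (ε j : ℝ) = ε' j * (Pi.single (τ j) 1 : ι → ℝ) (τ' j) := by
    simpa using congrFun (LinearEquiv.congr_fun h (Pi.single (τ j) 1)) j
  have hτ (j : ι) : τ j = τ' j := by
    by_contra hne
    simpa [Pi.single_eq_of_ne' hne] using key j
  have hε (j : ι) : ε j = ε' j := by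
    simpa [hτ j, Units.ext_iff] using key j
  rw [Equiv.ext hτ, funext hε]

end SignedPerm

theorem signedPerm_image_Zcube (d n : ℕ) (τ : Equiv.Perm (Fin n)) (ε : Fin n → ℤˣ) :
    signedPerm τ ε '' Zcube d n = Zcube d n := by
  have hpre : signedPerm τ ε ⁻¹' Zcube d n = Zcube d n := by
    ext x
    simp only [Zcube, mem_preimage, Set.mem_ofPred_eq, signedPerm_apply, Zset.units_mul_mem_iff]
    exact τ.forall_congr_right (q := fun i => x i ∈ Zset d)
  calc signedPerm τ ε '' Zcube d n = signedPerm τ ε '' (signedPerm τ ε ⁻¹' Zcube d n) := by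
        rw [hpre]
    _ = Zcube d n := image_preimage_eq _ (signedPerm τ ε).surjective

theorem exists_signedPerm_eq_of_mapsTo_cubeVertices {ι : Type*} [Finite ι] [DecidableEq ι]
    {c : ℝ} (hc : 0 < c) (φ : (ι → ℝ) ≃ₗ[ℝ] (ι → ℝ))
    (hφ : MapsTo φ (cubeVertices c) (cubeVertices c)) : ∃ τ ε, signedPerm τ ε = φ := by
  choose τ ε hτε using fun j => exists_eq_unit_mul_apply_of_mapsTo_cubeVertices hc
    (LinearMap.proj j ∘ₗ φ.toLinearMap) fun x hx => hφ hx j trivial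
  have hsurj : Surjective τ := by
    intro i
    by_contra! h
    have : φ (Pi.single i 1) = φ 0 := funext fun j => by
      simpa [Pi.single_eq_of_ne (h j)] using hτε j (Pi.single i 1)
    simpa using congrFun (φ.injective this) i
  refine ⟨.ofBijective τ ⟨Finite.injective_iff_surjective.mpr hsurj, hsurj⟩, ε, ?_⟩
  ext x j
  exact (hτε j x).symm

theorem image_Zcube_eq_self_iff {d n : ℕ} (hd : 1 ≤ d) (φ : (Fin n → ℝ) ≃ₗ[ℝ] (Fin n → ℝ)) :
    φ '' Zcube d n = Zcube d n ↔ ∃ τ ε, signedPerm τ ε = φ := by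
  refine ⟨fun h => ?_, ?_⟩
  · exact exists_signedPerm_eq_of_mapsTo_cubeVertices (by exact_mod_cast hd) φ
      (extremePoints_Zcube d n ▸ φ.mapsTo_extremePoints_of_image_eq h)
  · rintro ⟨τ, ε, rfl⟩
    exact signedPerm_image_Zcube d n τ ε

theorem stmt12_general (d n : ℕ) (hd : 1 ≤ d) :
    (∀ φ : (Fin n → ℝ) ≃ₗ[ℝ] (Fin n → ℝ), φ '' Zcube d n = Zcube d n →
      ∃ (σ : Equiv.Perm (Fin n)) (ε : Fin n → ℝ),
        (∀ i, ε i = 1 ∨ ε i = -1) ∧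
        ∀ i, φ (Pi.single i 1) = ε i • (Pi.single (σ i) 1 : Fin n → ℝ)) ∧
    Nat.card {φ : (Fin n → ℝ) ≃ₗ[ℝ] (Fin n → ℝ) // φ '' Zcube d n = Zcube d n} =
      2 ^ n * n.factorial := by
  refine ⟨fun φ hφ => ?_, ?_⟩
  · obtain ⟨τ, ε, rfl⟩ := (image_Zcube_eq_self_iff hd φ).mp hφ
    refine ⟨τ.symm, fun i => ε (τ.symm i), fun i => ?_, signedPerm_single τ ε⟩
    rcases Int.units_eq_one_or (ε (τ.symm i)) with h | h <;> simp [h]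
  · calc Nat.card {φ : (Fin n → ℝ) ≃ₗ[ℝ] (Fin n → ℝ) // φ '' Zcube d n = Zcube d n}
        = Nat.card (Equiv.Perm (Fin n) × (Fin n → ℤˣ)) :=
          Nat.card_congr <| ((Equiv.ofInjective _ signedPerm_injective).trans
            (Equiv.subtypeEquivRight fun φ => by simp [image_Zcube_eq_self_iff hd])).symm
      _ = 2 ^ n * n.factorial := by simp [Fintype.card_perm, mul_comm]

/-- A linear automorphism of `ℝ^n` preserving `Z_d^n` (for `d ≥ 1`) is a signed
permutation of the standard basis; the group of all such automorphisms has order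
`2^n · n!`. -/
theorem stmt12 (d n : ℕ) (hd : 1 ≤ d) (hn : 1 ≤ n) :
    (∀ φ : (Fin n → ℝ) ≃ₗ[ℝ] (Fin n → ℝ), φ '' Zcube d n = Zcube d n →
      ∃ (σ : Equiv.Perm (Fin n)) (ε : Fin n → ℝ),
        (∀ i, ε i = 1 ∨ ε i = -1) ∧
        ∀ i, φ (Pi.single i 1) = ε i • (Pi.single (σ i) 1 : Fin n → ℝ)) ∧
    Nat.card {φ : (Fin n → ℝ) ≃ₗ[ℝ] (Fin n → ℝ) // φ '' Zcube d n = Zcube d n} =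
      2 ^ n * n.factorial :=
  stmt12_general d n hd
end

section
/- Let t ≥ 1 and let m_1, m_2, …, m_t be integers with m_i > 1 for all i, and let n ≥ 1. If there exists an injective group homomorphism from the direct product S_{m_1} × S_{m_2} × ⋯ × S_{m_t} of symmetric groups into the symmetric group S_n, then m_1 + m_2 + ⋯ + m_t ≤ n. -/
/-!
Write each `m i` as `2 * a i + 3 * b i`. Disjoint transpositions and `3`-cycles embed
`C₂ ^ a i × C₃ ^ b i` into `S_{m i}`, so the product of the symmetric groups contains `V × W`
with `V` an `𝔽₂`-space of dimension `∑ a i` and `W` an `𝔽₃`-space of dimension `∑ b i`, and it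
suffices to show that a faithful action of `V × W` on `X` forces
`2 dim V + 3 dim W ≤ |X|`.

Since `V × W` is abelian, all points of an orbit have the same stabilizer `K`, and the orbit has
`[V × W : K]` points. This index is divisible by the coprime numbers `[V : K ∩ V] = 2 ^ c` and
`[W : K ∩ W] = 3 ^ d`, hence is at least `2 ^ c * 3 ^ d ≥ 2 c + 3 d`. Faithfulness says that the
stabilizers meet in `0`, so the subspaces `K ∩ V` meet in `0` and their codimensions `c` add up to
at least `dim V`; likewise for `W`. Summing over the orbits gives the bound.
-/

open Module

theorem Module.finrank_le_sum_finrank_quotient {K V ι : Type*} [DivisionRing K] [AddCommGroup V]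
    [Module K V] [FiniteDimensional K V] [Fintype ι] (U : ι → Submodule K V)
    (hU : ⨅ i, U i = ⊥) : finrank K V ≤ ∑ i, finrank K (V ⧸ U i) := by
  have hinj : Function.Injective (LinearMap.pi fun i => (U i).mkQ) := by
    rw [← LinearMap.ker_eq_bot, LinearMap.ker_pi]
    simpa only [Submodule.ker_mkQ] using hU
  simpa only [finrank_pi_fintype] using LinearMap.finrank_le_finrank_of_injective hinj

theorem Nat.mul_add_mul_le_pow_mul_pow {p q : ℕ} (hp : 2 ≤ p) (hq : 2 ≤ q) (a b : ℕ) :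
    p * a + q * b ≤ p ^ a * q ^ b := by
  have ha := Nat.mul_le_pow (a := p) (by omega) a
  have hb := Nat.mul_le_pow (a := q) (by omega) b
  rcases Nat.eq_zero_or_pos a with rfl | ha_pos
  · simpa using hb
  rcases Nat.eq_zero_or_pos b with rfl | hb_pos
  · simpa using ha
  calc p * a + q * b ≤ p ^ a + q ^ b := by omega
    _ ≤ p ^ a * q ^ b := Nat.add_le_mul (by nlinarith) (by nlinarith)

namespace MulAction

theorem card_eq_sum_index_stabilizer {G X : Type*} [Group G] [Finite G] [MulAction G X]
    [Fintype (orbitRel.Quotient G X)] :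
    Nat.card X = ∑ ω : orbitRel.Quotient G X, (stabilizer G ω.out).index := by
  rw [Nat.card_congr (selfEquivSigmaOrbitsQuotientStabilizer G X), Nat.card_sigma]
  rfl

theorem iInf_stabilizer_out_eq_bot {G X : Type*} [CommGroup G] [MulAction G X]
    [FaithfulSMul G X] : ⨅ ω : orbitRel.Quotient G X, stabilizer G ω.out = ⊥ := by
  refine eq_bot_iff.mpr fun g hg => Subgroup.mem_bot.mpr <| eq_of_smul_eq_smul (α := X) fun x => ?_
  obtain ⟨h, hx⟩ : ∃ h : G, h • x = (⟦x⟧ : orbitRel.Quotient G X).out :=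
    Quotient.mk_out (s := orbitRel G X) x
  have hg_mem := Subgroup.mem_iInf.mp hg ⟦x⟧
  rw [← hx, stabilizer_smul_eq_right, mem_stabilizer_iff] at hg_mem
  simpa using hg_mem

end MulAction

section ElementaryAbelian

variable {V W : Type*} [AddCommGroup V] [AddCommGroup W]

namespace Subgroup

variable (p : ℕ) [Module (ZMod p) V] (q : ℕ) [Module (ZMod q) W]

def fstSubmodule (K : Subgroup (Multiplicative (V × W))) : Submodule (ZMod p) V :=
  AddSubgroup.toZModSubmodule p (K.toAddSubgroup'.comap (AddMonoidHom.inl V W))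

def sndSubmodule (K : Subgroup (Multiplicative (V × W))) : Submodule (ZMod q) W :=
  AddSubgroup.toZModSubmodule q (K.toAddSubgroup'.comap (AddMonoidHom.inr V W))

variable {p q}

@[simp] theorem mem_fstSubmodule {K : Subgroup (Multiplicative (V × W))} {v : V} :
    v ∈ K.fstSubmodule p ↔ Multiplicative.ofAdd (v, 0) ∈ K := Iff.rfl

@[simp] theorem mem_sndSubmodule {K : Subgroup (Multiplicative (V × W))} {w : W} :
    w ∈ K.sndSubmodule q ↔ Multiplicative.ofAdd (0, w) ∈ K := Iff.rfl

theorem pow_finrank_quotient_fstSubmodule_dvd_index [Fact p.Prime] [Finite V]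
    (K : Subgroup (Multiplicative (V × W))) :
    p ^ finrank (ZMod p) (V ⧸ K.fstSubmodule p) ∣ K.index := by
  have hdvd := AddSubgroup.relIndex_dvd_index_of_normal (H := K.toAddSubgroup')
    (AddMonoidHom.inl V W).range
  rw [← AddSubgroup.index_comap] at hdvd
  have hcard := Module.natCard_eq_pow_finrank (K := ZMod p) (V := V ⧸ K.fstSubmodule p)
  rw [Nat.card_zmod] at hcard
  rw [← hcard]
  exact hdvd

theorem pow_finrank_quotient_sndSubmodule_dvd_index [Fact q.Prime] [Finite W]
    (K : Subgroup (Multiplicative (V × W))) :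
    q ^ finrank (ZMod q) (W ⧸ K.sndSubmodule q) ∣ K.index := by
  have hdvd := AddSubgroup.relIndex_dvd_index_of_normal (H := K.toAddSubgroup')
    (AddMonoidHom.inr V W).range
  rw [← AddSubgroup.index_comap] at hdvd
  have hcard := Module.natCard_eq_pow_finrank (K := ZMod q) (V := W ⧸ K.sndSubmodule q)
  rw [Nat.card_zmod] at hcard
  rw [← hcard]
  exact hdvd

theorem pow_finrank_mul_pow_finrank_le_index [Fact p.Prime] [Fact q.Prime] (hpq : p ≠ q)
    [Finite V] [Finite W] (K : Subgroup (Multiplicative (V × W))) :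
    p ^ finrank (ZMod p) (V ⧸ K.fstSubmodule p) * q ^ finrank (ZMod q) (W ⧸ K.sndSubmodule q)
      ≤ K.index := by
  have hcop : Nat.Coprime (p ^ finrank (ZMod p) (V ⧸ K.fstSubmodule p))
      (q ^ finrank (ZMod q) (W ⧸ K.sndSubmodule q)) :=
    ((Nat.coprime_primes Fact.out Fact.out).mpr hpq).pow _ _
  exact Nat.le_of_dvd (Nat.pos_of_ne_zero K.index_ne_zero_of_finite) <|
    hcop.mul_dvd_of_dvd_of_dvd K.pow_finrank_quotient_fstSubmodule_dvd_index
      K.pow_finrank_quotient_sndSubmodule_dvd_index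

theorem iInf_fstSubmodule_eq_bot {ι : Type*} {K : ι → Subgroup (Multiplicative (V × W))}
    (hK : ⨅ i, K i = ⊥) : ⨅ i, (K i).fstSubmodule p = ⊥ := by
  refine eq_bot_iff.mpr fun v hv => ?_
  simp only [Submodule.mem_iInf, mem_fstSubmodule] at hv
  have hv_mem : Multiplicative.ofAdd (v, (0 : W)) ∈ ⨅ i, K i := mem_iInf.mpr hv
  rw [hK, mem_bot] at hv_mem
  simpa using congrArg (fun g => (Multiplicative.toAdd g).1) hv_mem

theorem iInf_sndSubmodule_eq_bot {ι : Type*} {K : ι → Subgroup (Multiplicative (V × W))}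
    (hK : ⨅ i, K i = ⊥) : ⨅ i, (K i).sndSubmodule q = ⊥ := by
  refine eq_bot_iff.mpr fun w hw => ?_
  simp only [Submodule.mem_iInf, mem_sndSubmodule] at hw
  have hw_mem : Multiplicative.ofAdd ((0 : V), w) ∈ ⨅ i, K i := mem_iInf.mpr hw
  rw [hK, mem_bot] at hw_mem
  simpa using congrArg (fun g => (Multiplicative.toAdd g).2) hw_mem

end Subgroup

theorem mul_finrank_add_mul_finrank_le_card {p q : ℕ} [Fact p.Prime] [Fact q.Prime]
    (hpq : p ≠ q) [Module (ZMod p) V] [Module (ZMod q) W] [Finite V] [Finite W]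
    {X : Type*} [Finite X] [MulAction (Multiplicative (V × W)) X]
    [FaithfulSMul (Multiplicative (V × W)) X] :
    p * finrank (ZMod p) V + q * finrank (ZMod q) W ≤ Nat.card X := by
  let G := Multiplicative (V × W)
  have : Fintype (MulAction.orbitRel.Quotient G X) := Fintype.ofFinite _
  let K (ω : MulAction.orbitRel.Quotient G X) := MulAction.stabilizer G ω.out
  have hK : ⨅ ω, K ω = ⊥ := MulAction.iInf_stabilizer_out_eq_bot
  have hV := finrank_le_sum_finrank_quotient _ (Subgroup.iInf_fstSubmodule_eq_bot (p := p) hK)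
  have hW := finrank_le_sum_finrank_quotient _ (Subgroup.iInf_sndSubmodule_eq_bot (q := q) hK)
  calc p * finrank (ZMod p) V + q * finrank (ZMod q) W
      ≤ ∑ ω, (p * finrank (ZMod p) (V ⧸ (K ω).fstSubmodule p)
          + q * finrank (ZMod q) (W ⧸ (K ω).sndSubmodule q)) := by
        rw [Finset.sum_add_distrib, ← Finset.mul_sum, ← Finset.mul_sum]
        gcongr
    _ ≤ ∑ ω, (K ω).index := by
        gcongr with ω
        exact (Nat.mul_add_mul_le_pow_mul_pow (Fact.out : p.Prime).two_le
          (Fact.out : q.Prime).two_le _ _).trans ((K ω).pow_finrank_mul_pow_finrank_le_index hpq)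
    _ = Nat.card X := MulAction.card_eq_sum_index_stabilizer.symm

end ElementaryAbelian

open Equiv

def fiberAddRightHom {ι : Type*} (α β : ι → Type*) (A B : Type*) [AddCommGroup A]
    [AddCommGroup B] :
    Multiplicative ((∀ i, α i → A) × (∀ i, β i → B)) →*
      ∀ i, Perm ((α i × A) ⊕ (β i × B)) where
  toFun g i := (prodCongrRight fun j => Equiv.addRight (g.toAdd.1 i j)).sumCongr
    (prodCongrRight fun j => Equiv.addRight (g.toAdd.2 i j))
  map_one' := by ext i (⟨j, x⟩ | ⟨j, y⟩) <;> simp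
  map_mul' g h := by ext i (⟨j, x⟩ | ⟨j, y⟩) <;> simp [add_assoc, add_left_comm, add_comm]

theorem fiberAddRightHom_injective {ι : Type*} (α β : ι → Type*) (A B : Type*)
    [AddCommGroup A] [AddCommGroup B] : Function.Injective (fiberAddRightHom α β A B) := by
  refine (injective_iff_map_eq_one _).mpr fun g hg => Multiplicative.toAdd.injective ?_
  have h₁ (i : ι) (j : α i) := congrFun (congrArg DFunLike.coe (congrFun hg i)) (.inl (j, 0))
  have h₂ (i : ι) (j : β i) := congrFun (congrArg DFunLike.coe (congrFun hg i)) (.inr (j, 0))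
  simp only [fiberAddRightHom] at h₁ h₂
  ext i j
  exacts [by simpa using h₁ i j, by simpa using h₂ i j]

theorem exists_two_mul_add_three_mul_eq {m : ℕ} (hm : 1 < m) : ∃ a b, 2 * a + 3 * b = m :=
  ⟨(m - 3 * (m % 2)) / 2, m % 2, by omega⟩

theorem stmt13_general (t n : ℕ) (m : Fin t → ℕ) (hm : ∀ i, 1 < m i)
    (f : (∀ i, Equiv.Perm (Fin (m i))) →* Equiv.Perm (Fin n))
    (hf : Function.Injective f) :
    ∑ i, m i ≤ n := by
  choose a b hab using fun i => exists_two_mul_add_three_mul_eq (hm i)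
  let e (i : Fin t) : (Fin (a i) × ZMod 2) ⊕ (Fin (b i) × ZMod 3) ≃ Fin (m i) :=
    Fintype.equivFinOfCardEq (by simp [← hab i, mul_comm])
  let φ := f.comp ((MulEquiv.piCongrRight fun i => (e i).permCongrHom).toMonoidHom.comp
    (fiberAddRightHom (fun i => Fin (a i)) (fun i => Fin (b i)) (ZMod 2) (ZMod 3)))
  have hφ : Function.Injective φ := by
    simp only [φ, MonoidHom.coe_comp, MulEquiv.coe_toMonoidHom]
    exact hf.comp ((MulEquiv.injective _).comp (fiberAddRightHom_injective _ _ _ _))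
  let := MulAction.compHom (Fin n) φ
  have : FaithfulSMul _ (Fin n) := ⟨fun h => hφ (Equiv.ext h)⟩
  have := mul_finrank_add_mul_finrank_le_card (p := 2) (q := 3) (by norm_num)
    (V := ∀ i, Fin (a i) → ZMod 2) (W := ∀ i, Fin (b i) → ZMod 3) (X := Fin n)
  simpa [← hab, finrank_pi_fintype, Finset.sum_add_distrib, Finset.mul_sum] using this

/-- If `S_{m_1} × ⋯ × S_{m_t}` embeds into `S_n` and all `m_i > 1`,
then `m_1 + ⋯ + m_t ≤ n`. -/
theorem stmt13 (t n : ℕ) (ht : 1 ≤ t) (hn : 1 ≤ n) (m : Fin t → ℕ) (hm : ∀ i, 1 < m i)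
    (f : (∀ i, Equiv.Perm (Fin (m i))) →* Equiv.Perm (Fin n))
    (hf : Function.Injective f) :
    ∑ i, m i ≤ n :=
  stmt13_general t n m hm f hf
end
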